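/- arXiv:1710.04136 — 2 statements merged into one kernel-verified Lean document; each statement's English description precedes it below -/
import Mathlib

section
/- For the quartic polynomial H̄(I_1,I_2,I_3,I_4) given by the four-particle KG normal form (with frequencies √(a+2), √(a+4), √(a+2), √a and quartic part (b/8)[3(I_1²+I_3²)/(4(a+2)) + 3I_2²/(8(a+4)) + 3I_4²/(8a) + 3I_2(I_1+I_3)/√(2(a+2)(a+4)) + 3I_4(I_1+I_3)/√(2a(a+2)) + 3I_2I_4/√(2a(a+4))]), the determinant of its 4×4 Hessian in (I_1,...,I_4) is nonzero whenever a > 0 and b ≠ 0. -/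
/-!
The quartic part of `H̄` is a quadratic form `I ⬝ᵥ Q *ᵥ I`, so its Hessian is the constant matrix
`Q + Qᵀ`. Rescaling each action by its frequency `ω_k` (`ω_k² = a + 2, a + 4, a + 2, a`) removes
all dependence on `a`: `Q + Qᵀ = (3b/32) D N D` with `D = diag ω_k⁻¹` and `N` a numerical coupling
matrix whose off-diagonal entries are `0` or `t = 2√2`. Hence the determinant is
`(3b/32)⁴ (det D)² det N`, and `det N = 4 (t - 1)² (2t + 1) ≠ 0`.
-/

/-- Partial derivative of `f : ℝ^n → ℝ` in the `i`-th coordinate direction. -/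
noncomputable def pd {n : ℕ} (f : (Fin n → ℝ) → ℝ) (i : Fin n) : (Fin n → ℝ) → ℝ :=
  fun x => fderiv ℝ f x (Pi.single i 1)

open Matrix ContinuousLinearMap

theorem pd_quadratic {n : ℕ} (c : ℝ) (p : Fin n → ℝ) (Q : Matrix (Fin n) (Fin n) ℝ)
    (j : Fin n) (x : Fin n → ℝ) :
    pd (fun v => c + p ⬝ᵥ v + v ⬝ᵥ Q *ᵥ v) j x = p j + ((Q + Qᵀ) *ᵥ x) j := by
  have hcoord (i : Fin n) : HasFDerivAt (fun v : Fin n → ℝ => v i) (proj (R := ℝ) i) x :=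
    hasFDerivAt_apply i x
  have hderiv : HasFDerivAt (fun v => c + p ⬝ᵥ v + v ⬝ᵥ Q *ᵥ v) _ x :=
    ((HasFDerivAt.fun_sum (u := Finset.univ) fun i _ => (hcoord i).const_mul (p i)).const_add c).add
      (HasFDerivAt.fun_sum (u := Finset.univ) fun i _ => (hcoord i).mul
        (HasFDerivAt.fun_sum (u := Finset.univ) fun k _ => (hcoord k).const_mul (Q i k)))
  rw [pd, hderiv.fderiv]
  simp [Pi.single_apply, mulVec, dotProduct, Finset.sum_add_distrib, mul_comm, mul_add, add_comm]

theorem hessian_quadratic {n : ℕ} (c : ℝ) (p : Fin n → ℝ) (Q : Matrix (Fin n) (Fin n) ℝ)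
    (x : Fin n → ℝ) :
    (of fun i j => pd (pd (fun v => c + p ⬝ᵥ v + v ⬝ᵥ Q *ᵥ v) j) i x) = Q + Qᵀ := by
  ext i j
  have hgrad : pd (fun v => c + p ⬝ᵥ v + v ⬝ᵥ Q *ᵥ v) j
      = fun y => p j + (Q + Qᵀ) j ⬝ᵥ y + y ⬝ᵥ (0 : Matrix (Fin n) (Fin n) ℝ) *ᵥ y := by
    funext y
    rw [pd_quadratic, zero_mulVec, dotProduct_zero, add_zero]
    rfl
  rw [of_apply, hgrad, pd_quadratic]
  simp [add_comm]

theorem det_smul_diagonal_mul_mul_diagonal {n : ℕ} (c : ℝ) (d : Fin n → ℝ)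
    (M : Matrix (Fin n) (Fin n) ℝ) :
    (c • (diagonal d * M * diagonal d)).det = c ^ n * (∏ i, d i) ^ 2 * M.det := by
  rw [det_smul, det_mul, det_mul, det_diagonal, Fintype.card_fin]
  ring

def couplingMatrix (t : ℝ) : Matrix (Fin 4) (Fin 4) ℝ :=
  !![2, t, 0, t; t, 1, t, t; 0, t, 2, t; t, t, t, 1]

theorem det_couplingMatrix (t : ℝ) :
    (couplingMatrix t).det = 4 * (t - 1) ^ 2 * (2 * t + 1) := by
  simp [couplingMatrix, det_succ_row_zero, Fin.sum_univ_succ, Fin.succAbove]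
  ring

def kgFrequencySq (a : ℝ) : Fin 4 → ℝ := ![a + 2, a + 4, a + 2, a]

theorem kgFrequencySq_pos {a : ℝ} (ha : 0 < a) (i : Fin 4) : 0 < kgFrequencySq a i := by
  fin_cases i <;> simp [kgFrequencySq, ha, add_pos]

/-- Entry `(i, j)` with `i ≤ j` is the coefficient of `I_i I_j` in the quartic part of `H̄`. -/
noncomputable def kgQuarticMatrix (a b : ℝ) : Matrix (Fin 4) (Fin 4) ℝ :=
  (b / 8) • !![3 / (4 * (a + 2)), 3 / √(2 * (a + 2) * (a + 4)), 0, 3 / √(2 * a * (a + 2));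
    0, 3 / (8 * (a + 4)), 3 / √(2 * (a + 2) * (a + 4)), 3 / √(2 * a * (a + 4));
    0, 0, 3 / (4 * (a + 2)), 3 / √(2 * a * (a + 2));
    0, 0, 0, 3 / (8 * a)]

theorem kgQuarticMatrix_add_transpose {a : ℝ} (ha : 0 < a) (b : ℝ) :
    kgQuarticMatrix a b + (kgQuarticMatrix a b)ᵀ = (3 * b / 32) •
      (diagonal (fun i => (√(kgFrequencySq a i))⁻¹) * couplingMatrix (2 * √2) *
        diagonal (fun i => (√(kgFrequencySq a i))⁻¹)) := by
  have h2 : √2 ^ 2 = 2 := Real.sq_sqrt (by norm_num)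
  have ha0 : √a ^ 2 = a := Real.sq_sqrt ha.le
  have ha2 : √(a + 2) ^ 2 = a + 2 := Real.sq_sqrt (by linarith)
  have ha4 : √(a + 4) ^ 2 = a + 4 := Real.sq_sqrt (by linarith)
  have hA : √(2 * (a + 2) * (a + 4)) = √2 * √(a + 2) * √(a + 4) := by
    rw [Real.sqrt_mul (by positivity), Real.sqrt_mul (by norm_num)]
  have hB : √(2 * a * (a + 2)) = √2 * √a * √(a + 2) := by
    rw [Real.sqrt_mul (by positivity), Real.sqrt_mul (by norm_num)]
  have hC : √(2 * a * (a + 4)) = √2 * √a * √(a + 4) := by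
    rw [Real.sqrt_mul (by positivity), Real.sqrt_mul (by norm_num)]
  ext i j
  fin_cases i <;> fin_cases j <;>
    simp only [kgQuarticMatrix, kgFrequencySq, couplingMatrix, hA, hB, hC, smul_of, smul_cons,
      smul_eq_mul, smul_empty, Matrix.add_apply, transpose_apply, of_apply, Matrix.smul_apply,
      mul_diagonal, diagonal_mul, cons_val', cons_val_zero, cons_val_one, cons_val,
      cons_val_fin_one, Fin.zero_eta, Fin.mk_one, Fin.reduceFinMk, mul_zero, zero_mul, add_zero,
      zero_add] <;>
    field_simp <;> grind

/-- For the four-particle KG normal form `H̄(I₁,I₂,I₃,I₄)` (variables `v 0, …, v 3`),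
the determinant of the 4×4 Hessian is nonzero whenever `a > 0`, `b ≠ 0`. -/
theorem stmt11 (a b : ℝ) (ha : 0 < a) (hb : b ≠ 0)
    (H : (Fin 4 → ℝ) → ℝ)
    (hH : ∀ v, H v = Real.sqrt (a + 2) / 2 * v 0 + Real.sqrt (a + 4) / 2 * v 1
      + Real.sqrt (a + 2) / 2 * v 2 + Real.sqrt a / 2 * v 3
      + b / 8 * (3 * ((v 0) ^ 2 + (v 2) ^ 2) / (4 * (a + 2))
        + 3 * (v 1) ^ 2 / (8 * (a + 4)) + 3 * (v 3) ^ 2 / (8 * a)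
        + 3 * v 1 * (v 0 + v 2) / Real.sqrt (2 * (a + 2) * (a + 4))
        + 3 * v 3 * (v 0 + v 2) / Real.sqrt (2 * a * (a + 2))
        + 3 * v 1 * v 3 / Real.sqrt (2 * a * (a + 4)))) :
    ∀ x : Fin 4 → ℝ, (Matrix.of fun i j => pd (pd H j) i x).det ≠ 0 := by
  intro x
  have hquadratic : H = fun v => 0 + (fun i => √(kgFrequencySq a i) / 2) ⬝ᵥ v
      + v ⬝ᵥ kgQuarticMatrix a b *ᵥ v := by
    funext v
    rw [hH]
    simp only [kgFrequencySq, kgQuarticMatrix, dotProduct, mulVec, Fin.sum_univ_four,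
      Matrix.smul_apply, of_apply, cons_val', cons_val_zero, cons_val_one, cons_val,
      cons_val_fin_one, smul_eq_mul]
    ring
  have hscaling : ∏ i, (√(kgFrequencySq a i))⁻¹ ≠ 0 :=
    Finset.prod_ne_zero_iff.mpr fun i _ =>
      inv_ne_zero (Real.sqrt_pos.mpr (kgFrequencySq_pos ha i)).ne'
  have hcoupling : 2 * √2 - 1 ≠ 0 := (by linarith [Real.one_lt_sqrt_two] : 0 < 2 * √2 - 1).ne'
  rw [hquadratic, hessian_quadratic, kgQuarticMatrix_add_transpose ha,
    det_smul_diagonal_mul_mul_diagonal, det_couplingMatrix]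
  positivity
end

section
/- On ℝ^{12} with canonical Poisson bracket, the five functions F_1 = p_1²+q_1²+p_5²+q_5², F_2 = p_2²+q_2²+p_4²+q_4², I_3 = p_3²+q_3², I_6 = p_6²+q_6², and G = (p_1q_5 − q_1p_5) − (p_2q_4 − q_2p_4) pairwise Poisson-commute. -/
/-!
Each of `F₁, F₂, I₃, I₆` is a sum `E_S = ∑_{i ∈ S} (pᵢ² + qᵢ²)` of oscillator energies over a set
`S` of modes, and any two such sums Poisson-commute. The function `G` is `L₀₄ - L₁₃`, where
`L_ab = p_a q_b - q_a p_b` generates simultaneous rotations of the `(q_a, q_b)` and `(p_a, p_b)`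
planes, and `{E_S, L_ab} = 2 (q_a q_b + p_a p_b) ([a ∈ S] - [b ∈ S])`. This vanishes as soon as
`S` contains both or neither of `a, b`, which is the case for all four sets `{0, 4}, {1, 3}, {2}, {5}`
and both pairs `(0, 4), (1, 3)`.
-/

/-- Canonical Poisson bracket on `ℝ^n × ℝ^n` with coordinates `(q, p)`. -/
noncomputable def pbracket {n : ℕ} (f g : (Fin n → ℝ) × (Fin n → ℝ) → ℝ)
    (x : (Fin n → ℝ) × (Fin n → ℝ)) : ℝ :=
  ∑ j : Fin n,
    (fderiv ℝ f x (Pi.single j 1, 0) * fderiv ℝ g x (0, Pi.single j 1) -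
     fderiv ℝ f x (0, Pi.single j 1) * fderiv ℝ g x (Pi.single j 1, 0))

open ContinuousLinearMap

abbrev PhaseSpace (n : ℕ) := (Fin n → ℝ) × (Fin n → ℝ)

namespace PhaseSpace

variable {n : ℕ}

def modeEnergy (S : Finset (Fin n)) (x : PhaseSpace n) : ℝ :=
  ∑ i ∈ S, (x.2 i ^ 2 + x.1 i ^ 2)

def angularMomentum (a b : Fin n) (x : PhaseSpace n) : ℝ :=
  x.2 a * x.1 b - x.1 a * x.2 b

theorem hasFDerivAt_q (i : Fin n) (x : PhaseSpace n) :
    HasFDerivAt (fun y : PhaseSpace n => y.1 i) ((proj i).comp (fst ℝ (Fin n → ℝ) (Fin n → ℝ))) x :=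
  ((proj i).comp (fst ℝ (Fin n → ℝ) (Fin n → ℝ))).hasFDerivAt

theorem hasFDerivAt_p (i : Fin n) (x : PhaseSpace n) :
    HasFDerivAt (fun y : PhaseSpace n => y.2 i) ((proj i).comp (snd ℝ (Fin n → ℝ) (Fin n → ℝ))) x :=
  ((proj i).comp (snd ℝ (Fin n → ℝ) (Fin n → ℝ))).hasFDerivAt

theorem fderiv_modeEnergy_apply (S : Finset (Fin n)) (x v : PhaseSpace n) :
    fderiv ℝ (modeEnergy S) x v = ∑ i ∈ S, (2 * x.2 i * v.2 i + 2 * x.1 i * v.1 i) := by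
  have h : HasFDerivAt (modeEnergy S) _ x := HasFDerivAt.fun_sum (u := S) fun i _ =>
    ((hasFDerivAt_p i x).pow 2).add ((hasFDerivAt_q i x).pow 2)
  rw [h.fderiv]
  simp [mul_assoc]

theorem differentiable_angularMomentum (a b : Fin n) :
    Differentiable ℝ (angularMomentum a b) := by
  unfold angularMomentum
  fun_prop

theorem fderiv_angularMomentum_apply (a b : Fin n) (x v : PhaseSpace n) :
    fderiv ℝ (angularMomentum a b) x v =
      x.2 a * v.1 b + x.1 b * v.2 a - (x.1 a * v.2 b + x.2 b * v.1 a) := by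
  have h : HasFDerivAt (angularMomentum a b) _ x :=
    ((hasFDerivAt_p a x).mul (hasFDerivAt_q b x)).sub
      ((hasFDerivAt_q a x).mul (hasFDerivAt_p b x))
  rw [h.fderiv]
  simp

theorem pbracket_sub_right {f g h : PhaseSpace n → ℝ} {x : PhaseSpace n}
    (hg : DifferentiableAt ℝ g x) (hh : DifferentiableAt ℝ h x) :
    pbracket f (g - h) x = pbracket f g x - pbracket f h x := by
  simp only [pbracket, fderiv_sub hg hh, sub_apply, ← Finset.sum_sub_distrib]
  exact Finset.sum_congr rfl fun j _ => by ring

theorem pbracket_modeEnergy_modeEnergy (S T : Finset (Fin n)) (x : PhaseSpace n) :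
    pbracket (modeEnergy S) (modeEnergy T) x = 0 := by
  simp only [pbracket, fderiv_modeEnergy_apply, Pi.zero_apply, mul_zero, Pi.single_apply, mul_ite,
    mul_one, zero_add, Finset.sum_ite_eq', add_zero, ite_mul, zero_mul, Finset.sum_sub_distrib,
    Finset.sum_ite_mem, Finset.univ_inter]
  exact sub_eq_zero.2 (Finset.sum_congr rfl fun i _ => by ring)

theorem pbracket_modeEnergy_angularMomentum (S : Finset (Fin n)) (a b : Fin n) (x : PhaseSpace n) :
    pbracket (modeEnergy S) (angularMomentum a b) x =
      2 * (x.1 a * x.1 b + x.2 a * x.2 b) *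
        ((if a ∈ S then 1 else 0) - (if b ∈ S then 1 else 0)) := by
  simp only [pbracket, fderiv_modeEnergy_apply, fderiv_angularMomentum_apply, Pi.zero_apply,
    Pi.single_apply, mul_zero, mul_one, zero_add, add_zero, mul_ite, ite_mul, zero_mul, mul_sub,
    Finset.sum_ite_eq, Finset.sum_ite_eq', Finset.sum_sub_distrib, Finset.mem_univ, ↓reduceIte]
  split_ifs <;> ring

theorem pbracket_modeEnergy_angularMomentum_eq_zero {S : Finset (Fin n)} {a b : Fin n}
    (h : a ∈ S ↔ b ∈ S) (x : PhaseSpace n) :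
    pbracket (modeEnergy S) (angularMomentum a b) x = 0 := by
  simp [pbracket_modeEnergy_angularMomentum, h]

end PhaseSpace

open PhaseSpace

/-- The five first integrals of the six-particle KG normal form pairwise
Poisson-commute on `ℝ¹²`. -/
theorem stmt14
    (F1 F2 I3 I6 G : (Fin 6 → ℝ) × (Fin 6 → ℝ) → ℝ)
    (hF1 : ∀ x, F1 x = (x.2 0) ^ 2 + (x.1 0) ^ 2 + (x.2 4) ^ 2 + (x.1 4) ^ 2)
    (hF2 : ∀ x, F2 x = (x.2 1) ^ 2 + (x.1 1) ^ 2 + (x.2 3) ^ 2 + (x.1 3) ^ 2)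
    (hI3 : ∀ x, I3 x = (x.2 2) ^ 2 + (x.1 2) ^ 2)
    (hI6 : ∀ x, I6 x = (x.2 5) ^ 2 + (x.1 5) ^ 2)
    (hG : ∀ x, G x = (x.2 0 * x.1 4 - x.1 0 * x.2 4) - (x.2 1 * x.1 3 - x.1 1 * x.2 3)) :
    ∀ x, pbracket F1 F2 x = 0 ∧ pbracket F1 I3 x = 0 ∧ pbracket F1 I6 x = 0 ∧
      pbracket F1 G x = 0 ∧ pbracket F2 I3 x = 0 ∧ pbracket F2 I6 x = 0 ∧
      pbracket F2 G x = 0 ∧ pbracket I3 I6 x = 0 ∧ pbracket I3 G x = 0 ∧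
      pbracket I6 G x = 0 := by
  obtain rfl : F1 = modeEnergy {0, 4} := funext fun x => by simp [hF1, modeEnergy]; ring
  obtain rfl : F2 = modeEnergy {1, 3} := funext fun x => by simp [hF2, modeEnergy]; ring
  obtain rfl : I3 = modeEnergy {2} := funext fun x => by simp [hI3, modeEnergy]
  obtain rfl : I6 = modeEnergy {5} := funext fun x => by simp [hI6, modeEnergy]
  obtain rfl : G = angularMomentum 0 4 - angularMomentum 1 3 := funext hG
  intro x
  have hG_comm (S : Finset (Fin 6)) (h₀₄ : 0 ∈ S ↔ 4 ∈ S) (h₁₃ : 1 ∈ S ↔ 3 ∈ S) :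
      pbracket (modeEnergy S) (angularMomentum 0 4 - angularMomentum 1 3) x = 0 := by
    rw [pbracket_sub_right (differentiable_angularMomentum 0 4 x)
      (differentiable_angularMomentum 1 3 x), pbracket_modeEnergy_angularMomentum_eq_zero h₀₄,
      pbracket_modeEnergy_angularMomentum_eq_zero h₁₃, sub_zero]
  exact ⟨pbracket_modeEnergy_modeEnergy _ _ x, pbracket_modeEnergy_modeEnergy _ _ x,
    pbracket_modeEnergy_modeEnergy _ _ x, hG_comm _ (by decide) (by decide),
    pbracket_modeEnergy_modeEnergy _ _ x, pbracket_modeEnergy_modeEnergy _ _ x,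
    hG_comm _ (by decide) (by decide), pbracket_modeEnergy_modeEnergy _ _ x,
    hG_comm _ (by decide) (by decide), hG_comm _ (by decide) (by decide)⟩
end
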